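/- Let s ≥ 1 and n ≥ 1 be integers, ν > 0, Q ≥ 1, and let N₂ be a real number with N₂ ≥ 2^{2νn}. For each nonzero multi-index m set α_m = |m|^{−2νn}·N₂^{|m|−1}·Q^{|m|}. Then for every integer f ≥ 1 and all nonzero multi-indices m^(1),…,m^(f) one has α_{m^(1)}·⋯·α_{m^(f)} ≤ α_{m^(1)+⋯+m^(f)}. -/
import Mathlib


/-- `α_m = |m|^{−2νn}·N₂^{|m|−1}·Q^{|m|}`, as a function of `k = |m|`. -/
noncomputable def alph (ν : ℝ) (n : ℕ) (N₂ Q : ℝ) (k : ℕ) : ℝ :=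
  (k : ℝ) ^ (-(2 * ν * (n : ℝ))) * N₂ ^ (k - 1) * Q ^ k

lemma alph_pos (ν : ℝ) (n : ℕ) (N₂ Q : ℝ) (hN : 0 < N₂) (hQ : 0 < Q) (k : ℕ) (hk : 1 ≤ k) :
    0 < alph ν n N₂ Q k := by
  have hk' : (0:ℝ) < (k:ℝ) := by exact_mod_cast hk
  unfold alph
  positivity

lemma alph_mul_le (ν : ℝ) (n : ℕ) (hν : 0 < ν) (hn : 1 ≤ n) (Q N₂ : ℝ) (hQ : 1 ≤ Q)
    (hN₂ : (2 : ℝ) ^ (2 * ν * (n : ℝ)) ≤ N₂) (k l : ℕ) (hk : 1 ≤ k) (hl : 1 ≤ l) :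
    alph ν n N₂ Q k * alph ν n N₂ Q l ≤ alph ν n N₂ Q (k + l) := by
  set c : ℝ := 2 * ν * (n : ℝ) with hc
  have hc0 : 0 ≤ c := by
    have : (1:ℝ) ≤ (n:ℝ) := by exact_mod_cast hn
    positivity
  have h2c : (0:ℝ) < (2:ℝ) ^ c := Real.rpow_pos_of_pos (by norm_num) c
  have hN0 : 0 < N₂ := lt_of_lt_of_le h2c hN₂
  have hkR : (1:ℝ) ≤ (k:ℝ) := by exact_mod_cast hk
  have hlR : (1:ℝ) ≤ (l:ℝ) := by exact_mod_cast hl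
  have hk0 : (0:ℝ) < (k:ℝ) := lt_of_lt_of_le one_pos hkR
  have hl0 : (0:ℝ) < (l:ℝ) := lt_of_lt_of_le one_pos hlR
  have hkl0 : (0:ℝ) < (k:ℝ) + (l:ℝ) := by linarith
  -- key scalar estimate
  have key : (k:ℝ) ^ (-c) * (l:ℝ) ^ (-c) ≤ ((k:ℝ) + (l:ℝ)) ^ (-c) * N₂ := by
    have h1 : (k:ℝ) + (l:ℝ) ≤ 2 * ((k:ℝ) * (l:ℝ)) := by nlinarith
    have h2 : (2 * ((k:ℝ) * (l:ℝ))) ^ (-c) ≤ ((k:ℝ) + (l:ℝ)) ^ (-c) :=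
      Real.rpow_le_rpow_of_nonpos hkl0 h1 (neg_nonpos.mpr hc0)
    have h3 : (2 * ((k:ℝ) * (l:ℝ))) ^ (-c) = (2:ℝ) ^ (-c) * ((k:ℝ) ^ (-c) * (l:ℝ) ^ (-c)) := by
      rw [Real.mul_rpow (by norm_num) (by positivity), Real.mul_rpow hk0.le hl0.le]
    have h4 : (k:ℝ) ^ (-c) * (l:ℝ) ^ (-c) = (2:ℝ) ^ c * ((2 * ((k:ℝ) * (l:ℝ))) ^ (-c)) := by
      rw [h3, ← mul_assoc, ← Real.rpow_add (by norm_num), add_neg_cancel, Real.rpow_zero, one_mul]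
    calc (k:ℝ) ^ (-c) * (l:ℝ) ^ (-c)
        = (2:ℝ) ^ c * ((2 * ((k:ℝ) * (l:ℝ))) ^ (-c)) := h4
      _ ≤ (2:ℝ) ^ c * (((k:ℝ) + (l:ℝ)) ^ (-c)) := by
          exact mul_le_mul_of_nonneg_left h2 h2c.le
      _ ≤ N₂ * (((k:ℝ) + (l:ℝ)) ^ (-c)) := by
          exact mul_le_mul_of_nonneg_right hN₂ (by positivity)
      _ = ((k:ℝ) + (l:ℝ)) ^ (-c) * N₂ := by ring
  have hkl1 : k + l - 1 = (k - 1) + (l - 1) + 1 := by omega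
  unfold alph
  rw [hkl1, Nat.cast_add, pow_add, pow_add, pow_add, pow_one]
  have hP : (0:ℝ) ≤ N₂ ^ (k - 1) * N₂ ^ (l - 1) * (Q ^ k * Q ^ l) := by positivity
  calc (k:ℝ) ^ (-c) * N₂ ^ (k - 1) * Q ^ k * ((l:ℝ) ^ (-c) * N₂ ^ (l - 1) * Q ^ l)
      = ((k:ℝ) ^ (-c) * (l:ℝ) ^ (-c)) * (N₂ ^ (k - 1) * N₂ ^ (l - 1) * (Q ^ k * Q ^ l)) := by
        ring
    _ ≤ (((k:ℝ) + (l:ℝ)) ^ (-c) * N₂) * (N₂ ^ (k - 1) * N₂ ^ (l - 1) * (Q ^ k * Q ^ l)) :=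
        mul_le_mul_of_nonneg_right key hP
    _ = ((k:ℝ) + (l:ℝ)) ^ (-c) * (N₂ ^ (k - 1) * N₂ ^ (l - 1) * N₂) * (Q ^ k * Q ^ l) := by
        ring

/-- submultiplicativity of the bounding sequence `α_m`,
the key estimate (29) in the inductive proof of Lemma 5 of the paper. -/
theorem stmt9 (s n : ℕ) (hs : 1 ≤ s) (hn : 1 ≤ n) (ν : ℝ) (hν : 0 < ν)
    (Q N₂ : ℝ) (hQ : 1 ≤ Q) (hN₂ : (2 : ℝ) ^ (2 * ν * (n : ℝ)) ≤ N₂) :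
    ∀ f : ℕ, 1 ≤ f → ∀ M : Fin f → Fin s → ℕ, (∀ i, M i ≠ 0) →
      ∏ i, alph ν n N₂ Q (∑ j, M i j) ≤ alph ν n N₂ Q (∑ i, ∑ j, M i j) := by
  have hN0 : 0 < N₂ :=
    lt_of_lt_of_le (Real.rpow_pos_of_pos (by norm_num) _) hN₂
  have hQ0 : 0 < Q := lt_of_lt_of_le one_pos hQ
  have hsum : ∀ {g : ℕ} (M : Fin g → Fin s → ℕ) (i : Fin g), M i ≠ 0 → 1 ≤ ∑ j, M i j := by
    intro g M i hMi
    rw [Nat.one_le_iff_ne_zero]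
    intro h0
    apply hMi
    funext j
    exact (Finset.sum_eq_zero_iff.mp h0) j (Finset.mem_univ j)
  intro f hf
  induction f with
  | zero => omega
  | succ f ih =>
    intro M hM
    rcases Nat.eq_zero_or_pos f with rfl | hf'
    · simp
    · rw [Fin.prod_univ_succ, Fin.sum_univ_succ]
      have h1 : 1 ≤ ∑ j, M 0 j := hsum M 0 (hM 0)
      have ihh := ih hf' (fun i => M i.succ) (fun i => hM i.succ)
      have hl : 1 ≤ ∑ i : Fin f, ∑ j, M i.succ j := by
        calc 1 ≤ ∑ j, M (⟨0, hf'⟩ : Fin f).succ j := hsum (fun i => M i.succ) ⟨0, hf'⟩ (hM _)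
          _ ≤ ∑ i : Fin f, ∑ j, M i.succ j :=
            Finset.single_le_sum (f := fun i : Fin f => ∑ j, M i.succ j)
              (fun i _ => Nat.zero_le _) (Finset.mem_univ _)
      calc alph ν n N₂ Q (∑ j, M 0 j) * ∏ i : Fin f, alph ν n N₂ Q (∑ j, M i.succ j)
          ≤ alph ν n N₂ Q (∑ j, M 0 j) * alph ν n N₂ Q (∑ i : Fin f, ∑ j, M i.succ j) :=
            mul_le_mul_of_nonneg_left ihh (alph_pos ν n N₂ Q hN0 hQ0 _ h1).le
        _ ≤ alph ν n N₂ Q ((∑ j, M 0 j) + ∑ i : Fin f, ∑ j, M i.succ j) :=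
            alph_mul_le ν n hν hn Q N₂ hQ hN₂ _ _ h1 hl
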